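/- arXiv:2311.01418 — 10 statements merged into one kernel-verified Lean document; each statement's English description precedes it below -/
import Mathlib

section
/- For all natural numbers N and M with 3 ≤ N < M, one has π²·(3 + tan²(π/N))/(24·N·tan(π/N)) > π²·(3 + tan²(π/M))/(24·M·tan(π/M)). (Equivalently, since the paper proves T(P_N) = −E_N/2, the torsion energy T(P_N) of the regular N-gon of area π is strictly increasing in N.) -/
/-!
With `t = π / N` one has `N = π / t` and `(3 + tan² t) / tan t = 2 (2 + cos 2t) / sin 2t`, so
`E_N = (π / 24) · f (2π / N)` for `f s = s (2 + cos s) / sin s`. As `2π / N` decreases in `N`, it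
suffices that `f` is strictly increasing on `(0, π)`. The numerator of `f'` is
`φ s = 2 sin s + sin s cos s - s - 2 s cos s`, which vanishes at `0` and has derivative
`2 sin s (s - sin s) > 0`, hence is positive on `(0, π)`.
-/

open Real Set

noncomputable def torsionProfile (s : ℝ) : ℝ := s * (2 + cos s) / sin s

lemma hasDerivAt_two_mul_sin_add_sin_mul_cos_sub (s : ℝ) :
    HasDerivAt (fun x ↦ 2 * sin x + sin x * cos x - x - 2 * x * cos x)
      (2 * sin s * (s - sin s)) s := by
  have h := ((((hasDerivAt_sin s).const_mul 2).add ((hasDerivAt_sin s).mul (hasDerivAt_cos s))).sub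
    (hasDerivAt_id s)).sub (((hasDerivAt_id s).const_mul 2).mul (hasDerivAt_cos s))
  refine h.congr_deriv ?_
  simp only [id_eq]
  linear_combination sin_sq_add_cos_sq s

lemma mul_one_add_two_mul_cos_lt_sin_mul_two_add_cos {s : ℝ} (hs₀ : 0 < s) (hsπ : s < π) :
    s * (1 + 2 * cos s) < sin s * (2 + cos s) := by
  set φ : ℝ → ℝ := fun x ↦ 2 * sin x + sin x * cos x - x - 2 * x * cos x
  have hφ : StrictMonoOn φ (Icc 0 π) := by
    refine strictMonoOn_of_deriv_pos (convex_Icc 0 π)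
      (fun x _ ↦ (hasDerivAt_two_mul_sin_add_sin_mul_cos_sub x).continuousAt.continuousWithinAt)
      fun x hx ↦ ?_
    rw [interior_Icc] at hx
    rw [(hasDerivAt_two_mul_sin_add_sin_mul_cos_sub x).deriv]
    have := sin_pos_of_pos_of_lt_pi hx.1 hx.2
    have := sub_pos.2 (sin_lt hx.1)
    positivity
  have := hφ (left_mem_Icc.2 pi_pos.le) ⟨hs₀.le, hsπ.le⟩ hs₀
  simp only [φ, sin_zero, cos_zero] at this
  linarith

lemma torsionProfile_strictMonoOn : StrictMonoOn torsionProfile (Ioo 0 π) := by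
  refine strictMonoOn_of_deriv_pos (convex_Ioo 0 π) (fun x hx ↦ ?_) fun x hx ↦ ?_
  · have hsin := (sin_pos_of_pos_of_lt_pi hx.1 hx.2).ne'
    exact (ContinuousAt.div (by fun_prop) continuous_sin.continuousAt hsin).continuousWithinAt
  · rw [interior_Ioo] at hx
    have hsin := sin_pos_of_pos_of_lt_pi hx.1 hx.2
    have hnum : HasDerivAt (fun s ↦ s * (2 + cos s)) (2 + cos x - x * sin x) x := by
      refine ((hasDerivAt_id x).mul ((hasDerivAt_const x 2).add (hasDerivAt_cos x))).congr_deriv ?_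
      simp only [id_eq, Pi.add_apply]
      ring
    have hderiv : HasDerivAt torsionProfile
        (((2 + cos x - x * sin x) * sin x - x * (2 + cos x) * cos x) / sin x ^ 2) x :=
      hnum.div (hasDerivAt_sin x) hsin.ne'
    have hnumer : (2 + cos x - x * sin x) * sin x - x * (2 + cos x) * cos x
        = sin x * (2 + cos x) - x * (1 + 2 * cos x) := by
      linear_combination (-x) * sin_sq_add_cos_sq x
    rw [hderiv.deriv, hnumer]
    have := sub_pos.2 (mul_one_add_two_mul_cos_lt_sin_mul_two_add_cos hx.1 hx.2)
    positivity

lemma three_add_tan_sq_div_tan {t : ℝ} (hsin : sin t ≠ 0) (hcos : cos t ≠ 0) :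
    (3 + tan t ^ 2) / tan t = 2 * (2 + cos (2 * t)) / sin (2 * t) := by
  rw [tan_eq_sin_div_cos, sin_two_mul, cos_two_mul]
  field_simp
  linear_combination sin_sq_add_cos_sq t

lemma pi_div_mem_Ioo_zero_pi_div_two {n : ℕ} (hn : 3 ≤ n) : π / n ∈ Ioo 0 (π / 2) := by
  have hn' : (2 : ℝ) < n := by exact_mod_cast hn
  exact ⟨by positivity, div_lt_div_of_pos_left pi_pos two_pos hn'⟩

lemma regularPolygon_energy_eq {n : ℕ} (hn : 3 ≤ n) :
    π ^ 2 * (3 + tan (π / n) ^ 2) / (24 * n * tan (π / n)) =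
      π / 24 * torsionProfile (2 * (π / n)) := by
  obtain ⟨ht₀, htπ⟩ := pi_div_mem_Ioo_zero_pi_div_two hn
  set t := π / n
  have hcast : (n : ℝ) = π / t := by
    simp only [t]
    field_simp
  have hsin : sin t ≠ 0 := (sin_pos_of_pos_of_lt_pi ht₀ (by linarith [pi_pos])).ne'
  have hcos : cos t ≠ 0 := (cos_pos_of_mem_Ioo ⟨by linarith, htπ⟩).ne'
  rw [hcast]
  calc π ^ 2 * (3 + tan t ^ 2) / (24 * (π / t) * tan t)
      = π * t / 24 * ((3 + tan t ^ 2) / tan t) := by field_simp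
    _ = π / 24 * torsionProfile (2 * t) := by
      rw [three_add_tan_sq_div_tan hsin hcos, torsionProfile]
      ring

/-- The quantity `E_N = π²(3 + tan²(π/N)) / (24 N tan(π/N))`, whose negative half is the
torsion energy `T(P_N)` of the regular `N`-gon of area `π`, is strictly decreasing in `N`;
equivalently `T(P_N)` is strictly increasing in `N`. -/
theorem stmt_0 (N M : ℕ) (hN : 3 ≤ N) (hNM : N < M) :
    π ^ 2 * (3 + tan (π / N) ^ 2) / (24 * N * tan (π / N)) >
      π ^ 2 * (3 + tan (π / M) ^ 2) / (24 * M * tan (π / M)) := by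
  have hM : 3 ≤ M := hN.trans hNM.le
  rw [regularPolygon_energy_eq hN, regularPolygon_energy_eq hM]
  have mem_Ioo {n : ℕ} (hn : 3 ≤ n) : 2 * (π / n) ∈ Ioo 0 π := by
    obtain ⟨h₀, h₁⟩ := pi_div_mem_Ioo_zero_pi_div_two hn
    constructor <;> linarith
  have hlt : π / M < π / N :=
    div_lt_div_of_pos_left pi_pos (by positivity) (by exact_mod_cast hNM)
  exact mul_lt_mul_of_pos_left
    (torsionProfile_strictMonoOn (mem_Ioo hM) (mem_Ioo hN) (by linarith)) (by positivity)
end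

section
/- For every natural number N ≥ 3, π²·(3 + tan²(π/N))/(24·N·tan(π/N)) > π/8. (Equivalently, T(P_N) < T(B): the unit disk is not a local minimizer of the torsion energy with boundary mean zero under Lipschitz volume-preserving perturbations.) -/
/-!
Put `t = tan (π / N)`. The inequality reduces to `3 t / (3 + t²) < π / N = arctan t`, the
lower Padé bound for `arctan` on `(0, ∞)`: the difference `arctan t - 3 t / (3 + t²)` vanishes at
`0` and has derivative `4 t⁴ / ((1 + t²) (3 + t²)²) > 0`.
-/

open Real

lemma Real.three_mul_div_three_add_sq_lt_arctan {t : ℝ} (ht : 0 < t) :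
    3 * t / (3 + t ^ 2) < arctan t := by
  let f : ℝ → ℝ := fun s ↦ arctan s - 3 * s / (3 + s ^ 2)
  have hf_deriv (s : ℝ) : HasDerivAt f (4 * s ^ 4 / ((1 + s ^ 2) * (3 + s ^ 2) ^ 2)) s := by
    refine ((hasDerivAt_arctan s).sub (((hasDerivAt_id' s).const_mul 3).div
      ((hasDerivAt_pow 2 s).const_add 3) (by positivity))).congr_deriv ?_
    field_simp
    ring
  have hf_mono : StrictMonoOn f (Set.Ici 0) := by
    refine strictMonoOn_of_deriv_pos (convex_Ici 0)
      (fun s _ ↦ (hf_deriv s).continuousAt.continuousWithinAt) fun s hs ↦ ?_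
    rw [interior_Ici, Set.mem_Ioi] at hs
    rw [(hf_deriv s).deriv]
    positivity
  simpa [f] using hf_mono Set.self_mem_Ici ht.le ht

lemma Real.three_mul_tan_lt {x : ℝ} (hx₀ : 0 < x) (hx : x < π / 2) :
    3 * tan x < x * (3 + tan x ^ 2) := by
  have h := three_mul_div_three_add_sq_lt_arctan (tan_pos_of_pos_of_lt_pi_div_two hx₀ hx)
  rwa [arctan_tan (by linarith) hx, div_lt_iff₀ (by positivity)] at h

/-- For every `N ≥ 3`, `E_N = π²(3 + tan²(π/N)) / (24 N tan(π/N)) > π/8`;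
equivalently `T(P_N) < T(B)`: the unit disk is not a local minimizer of the torsion
energy with boundary mean zero under Lipschitz volume-preserving perturbations. -/
theorem stmt_2 (N : ℕ) (hN : 3 ≤ N) :
    π ^ 2 * (3 + tan (π / N) ^ 2) / (24 * N * tan (π / N)) > π / 8 := by
  have hN₀ : (0 : ℝ) < N := by positivity
  have hN₃ : (3 : ℝ) ≤ N := by exact_mod_cast hN
  have hx : π / N < π / 2 := div_lt_div_of_pos_left pi_pos two_pos (by linarith)
  have ht : 0 < tan (π / N) := tan_pos_of_pos_of_lt_pi_div_two (by positivity) hx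
  have key := three_mul_tan_lt (by positivity) hx
  rw [div_mul_eq_mul_div, lt_div_iff₀ hN₀] at key
  rw [gt_iff_lt, div_lt_div_iff₀ (by norm_num) (by positivity)]
  linear_combination (8 * π) * key
end

section
/- The function g(x) := x·(3 + tan²x)/tan x is strictly monotone increasing on the interval (0, π/3], and g(x) tends to 3 as x → 0⁺. -/
open Real Filter Topology

/-!
With `s = sin x`, `c = cos x` one has `x (3 + tan² x) / tan x = x (3c² + s²) / (s c)`, which by the
double-angle formulas is `ψ (2x)` for `ψ u = u (2 + cos u) / sin u`. The derivative of `ψ` is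
`((2 + cos u) sin u - u (1 + 2 cos u)) / sin² u`, and the numerator vanishes at `0` and has derivative
`2 sin u (u - sin u) > 0` on `(0, π)`; so `ψ` increases on `(0, π)` and `g` on `(0, π/2)`.
Near `0`, `ψ u = (2 + cos u) / sinc u → 3`.
-/

lemma mul_one_add_two_mul_cos_lt {u : ℝ} (h0 : 0 < u) (hπ : u ≤ π) :
    u * (1 + 2 * cos u) < (2 + cos u) * sin u := by
  let f : ℝ → ℝ := fun u => (2 + cos u) * sin u - u * (1 + 2 * cos u)
  have hf' (u : ℝ) : HasDerivAt f (2 * sin u * (u - sin u)) u := by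
    refine ((((hasDerivAt_cos u).const_add 2).mul (hasDerivAt_sin u)).sub
      ((hasDerivAt_id' u).mul (((hasDerivAt_cos u).const_mul 2).const_add 1))).congr_deriv ?_
    linear_combination sin_sq_add_cos_sq u
  have hmono : StrictMonoOn f (Set.Icc 0 π) := by
    refine strictMonoOn_of_deriv_pos (convex_Icc 0 π) (by fun_prop) fun x hx => ?_
    rw [interior_Icc] at hx
    rw [(hf' x).deriv]
    have := sin_pos_of_pos_of_lt_pi hx.1 hx.2
    have := sin_lt hx.1
    nlinarith
  have := hmono ⟨le_rfl, pi_pos.le⟩ ⟨h0.le, hπ⟩ h0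
  simp only [f, sin_zero, zero_mul, mul_zero, sub_zero] at this
  linarith

lemma hasDerivAt_mul_two_add_cos_div_sin {u : ℝ} (hu : sin u ≠ 0) :
    HasDerivAt (fun u => u * (2 + cos u) / sin u)
      (((2 + cos u) * sin u - u * (1 + 2 * cos u)) / sin u ^ 2) u := by
  refine (((hasDerivAt_id' u).mul ((hasDerivAt_cos u).const_add 2)).div
    (hasDerivAt_sin u) hu).congr_deriv ?_
  simp only [Pi.mul_apply]
  congr 1
  linear_combination (-u) * sin_sq_add_cos_sq u

lemma strictMonoOn_mul_two_add_cos_div_sin :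
    StrictMonoOn (fun u => u * (2 + cos u) / sin u) (Set.Ioo 0 π) := by
  refine strictMonoOn_of_deriv_pos (convex_Ioo 0 π) ?_ fun u hu => ?_
  · exact fun u hu => (hasDerivAt_mul_two_add_cos_div_sin
      (sin_pos_of_pos_of_lt_pi hu.1 hu.2).ne').continuousAt.continuousWithinAt
  · rw [interior_Ioo] at hu
    have hsin := sin_pos_of_pos_of_lt_pi hu.1 hu.2
    rw [(hasDerivAt_mul_two_add_cos_div_sin hsin.ne').deriv]
    have := mul_one_add_two_mul_cos_lt hu.1 hu.2.le
    exact div_pos (by linarith) (by positivity)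

lemma tendsto_mul_two_add_cos_div_sin :
    Tendsto (fun u => u * (2 + cos u) / sin u) (𝓝[≠] 0) (𝓝 3) := by
  have hcont : ContinuousAt (fun u => (2 + cos u) / sinc u) 0 :=
    (by fun_prop : Continuous fun u => 2 + cos u).continuousAt.div
      continuous_sinc.continuousAt (by simp [sinc_zero])
  have hlim := hcont.tendsto.mono_left (nhdsWithin_le_nhds (s := {0}ᶜ))
  norm_num [sinc_zero] at hlim
  refine hlim.congr' (eventually_nhdsWithin_of_forall fun u (hu : u ≠ 0) => ?_)
  rw [sinc_of_ne_zero hu]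
  field_simp

-- No side conditions: where `sin x` or `cos x` vanishes, both sides are `0` since `a / 0 = 0`.
lemma mul_three_add_tan_sq_div_tan (x : ℝ) :
    x * (3 + tan x ^ 2) / tan x = 2 * x * (2 + cos (2 * x)) / sin (2 * x) := by
  rw [tan_eq_sin_div_cos, cos_two_mul, sin_two_mul]
  by_cases hc : cos x = 0
  · simp [hc]
  by_cases hs : sin x = 0
  · simp [hs]
  field_simp
  linear_combination x * sin_sq_add_cos_sq x

lemma strictMonoOn_mul_three_add_tan_sq_div_tan :
    StrictMonoOn (fun x => x * (3 + tan x ^ 2) / tan x) (Set.Ioo 0 (π / 2)) := by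
  simp only [mul_three_add_tan_sq_div_tan]
  exact strictMonoOn_mul_two_add_cos_div_sin.comp (fun x _ y _ h => by linarith)
    fun x hx => ⟨by linarith [hx.1], by linarith [hx.2]⟩

lemma tendsto_mul_three_add_tan_sq_div_tan :
    Tendsto (fun x => x * (3 + tan x ^ 2) / tan x) (𝓝[≠] 0) (𝓝 3) := by
  simp only [mul_three_add_tan_sq_div_tan]
  refine tendsto_mul_two_add_cos_div_sin.comp (tendsto_nhdsWithin_iff.2 ⟨?_, ?_⟩)
  · exact ((continuous_const_mul (2 : ℝ)).tendsto' 0 0 (mul_zero 2)).mono_left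
      nhdsWithin_le_nhds
  · exact eventually_nhdsWithin_of_forall fun x (hx : x ≠ 0) => mul_ne_zero two_ne_zero hx

/-- The function `g(x) = x (3 + tan² x) / tan x` is strictly increasing on `(0, π/3]`
and tends to `3` as `x → 0⁺`. -/
theorem stmt_3 (g : ℝ → ℝ) (hg : ∀ x, g x = x * (3 + tan x ^ 2) / tan x) :
    StrictMonoOn g (Set.Ioc 0 (π / 3)) ∧ Tendsto g (𝓝[>] 0) (𝓝 3) := by
  obtain rfl : g = fun x => x * (3 + tan x ^ 2) / tan x := funext hg
  refine ⟨strictMonoOn_mul_three_add_tan_sq_div_tan.mono fun x hx => ?_,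
    tendsto_mul_three_add_tan_sq_div_tan.mono_left (nhdsWithin_mono 0 fun x hx => ?_)⟩
  · exact ⟨hx.1, by linarith [hx.2, pi_pos]⟩
  · exact ne_of_gt hx
end

section
/- Let ρ := √π/2. Then the integral over the square (−ρ, ρ) × (−ρ, ρ) ⊂ ℝ² of the function (x₁, x₂) ↦ π/12 − (x₁² + x₂²)/4 (with respect to Lebesgue measure) equals π²/24; moreover π²/24 > π/8. (Hence T(square of area π) = −π²/48 < −π/16 = T(unit disk).) -/
open Real MeasureTheory

lemma aux_inner (ρ c : ℝ) (h : 0 ≤ ρ) :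
    ∫ y in Set.Ioo (-ρ) ρ, (c - y ^ 2 / 4) = 2 * ρ * c - ρ ^ 3 / 6 := by
  rw [← MeasureTheory.integral_Ioc_eq_integral_Ioo,
    ← intervalIntegral.integral_of_le (by linarith : -ρ ≤ ρ)]
  have : ∫ y in (-ρ)..ρ, (c - y ^ 2 / 4) =
      (∫ y in (-ρ)..ρ, (c : ℝ)) - (∫ y in (-ρ)..ρ, y ^ 2) / 4 := by
    rw [intervalIntegral.integral_sub (intervalIntegrable_const)
      ((intervalIntegral.intervalIntegrable_pow 2).div_const 4),
      intervalIntegral.integral_div]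
  rw [this, intervalIntegral.integral_const, integral_pow]
  simp [smul_eq_mul]
  ring

lemma aux_inner' (ρ a b : ℝ) (h : 0 ≤ ρ) :
    ∫ y in Set.Ioo (-ρ) ρ, (a - b * y ^ 2) = 2 * ρ * a - 2 * b * ρ ^ 3 / 3 := by
  rw [← MeasureTheory.integral_Ioc_eq_integral_Ioo,
    ← intervalIntegral.integral_of_le (by linarith : -ρ ≤ ρ)]
  have : ∫ y in (-ρ)..ρ, (a - b * y ^ 2) =
      (∫ y in (-ρ)..ρ, (a : ℝ)) - b * (∫ y in (-ρ)..ρ, y ^ 2) := by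
    rw [intervalIntegral.integral_sub (intervalIntegrable_const)
      ((intervalIntegral.intervalIntegrable_pow 2).const_mul b),
      intervalIntegral.integral_const_mul]
  rw [this, intervalIntegral.integral_const, integral_pow]
  simp [smul_eq_mul]
  ring

/-- For the square of area `π` (inradius `ρ = √π/2`), the integral of the Neumann torsion
function with boundary vanishing mean `u(x) = π/12 - ‖x‖²/4` equals `π²/24`, and
`π²/24 > π/8`; hence `T(square of area π) = -π²/48 < -π/16 = T(unit disk)`. -/
theorem stmt_6 (ρ : ℝ) (hρ : ρ = Real.sqrt π / 2) :
    (∫ p in (Set.Ioo (-ρ) ρ ×ˢ Set.Ioo (-ρ) ρ : Set (ℝ × ℝ)),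
        (π / 12 - (p.1 ^ 2 + p.2 ^ 2) / 4) = π ^ 2 / 24) ∧
      π ^ 2 / 24 > π / 8 := by
  have hρ0 : 0 ≤ ρ := by rw [hρ]; positivity
  have hρ2 : ρ ^ 2 = π / 4 := by
    rw [hρ]; rw [div_pow, Real.sq_sqrt Real.pi_pos.le]; norm_num
  constructor
  · have hcont : Continuous fun p : ℝ × ℝ => π / 12 - (p.1 ^ 2 + p.2 ^ 2) / 4 := by
      fun_prop
    have hint : IntegrableOn (fun p : ℝ × ℝ => π / 12 - (p.1 ^ 2 + p.2 ^ 2) / 4)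
        (Set.Ioo (-ρ) ρ ×ˢ Set.Ioo (-ρ) ρ) volume := by
      apply IntegrableOn.mono_set
        (hcont.continuousOn.integrableOn_compact ((isCompact_Icc (a := -ρ) (b := ρ)).prod
          (isCompact_Icc (a := -ρ) (b := ρ))))
      exact Set.prod_mono Set.Ioo_subset_Icc_self Set.Ioo_subset_Icc_self
    rw [MeasureTheory.Measure.volume_eq_prod] at hint ⊢
    rw [MeasureTheory.setIntegral_prod _ hint]
    have h1 : ∀ x : ℝ, ∫ y in Set.Ioo (-ρ) ρ, (π / 12 - (x ^ 2 + y ^ 2) / 4)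
        = (2 * ρ * (π / 12 - x ^ 2 / 4) - ρ ^ 3 / 6) := by
      intro x
      have := aux_inner ρ (π / 12 - x ^ 2 / 4) hρ0
      rw [← this]
      congr 1 with y
      ring
    simp_rw [h1]
    have h2 : ∀ x : ℝ, 2 * ρ * (π / 12 - x ^ 2 / 4) - ρ ^ 3 / 6
        = (ρ * π / 6 - ρ ^ 3 / 6) - (ρ / 2) * x ^ 2 := by intro x; ring
    simp_rw [h2]
    rw [aux_inner' ρ _ _ hρ0]
    nlinarith [hρ2]
  · nlinarith [Real.pi_gt_three]
end

section
/- Let n ≥ 1 be an integer, let a : Fin n → ℝ satisfy a_i > 0 for all i, and define u : ℝⁿ → ℝ by u(x) = −(∑_i x_i²/a_i)/(2·∑_j 1/a_j). Then: (i) u is smooth and Δu = −1 everywhere on ℝⁿ; and (ii) for every index i and every point x ∈ ℝⁿ with x_i = a_i, the partial derivative ∂u/∂x_i at x equals −(∑_j 1/a_j)⁻¹, while for every x with x_i = −a_i the derivative of u at x in the direction −e_i also equals −(∑_j 1/a_j)⁻¹. In particular, on the whole boundary of the box Ω = ∏_i(−a_i, a_i) the outer normal derivative of u is the constant −(∑_j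 1/a_j)⁻¹ = −σ_n/σ_{n−1}. -/
open Real

/-- On the box `Ω = ∏ᵢ (-aᵢ, aᵢ) ⊂ ℝⁿ` with all `aᵢ > 0`, the function
`u(x) = -(∑ᵢ xᵢ²/aᵢ) / (2 ∑ⱼ 1/aⱼ)` is smooth, satisfies `Δu = -1` everywhere, and its
outer normal derivative on each face of the box is the constant `-(∑ⱼ 1/aⱼ)⁻¹`:
at points with `xᵢ = aᵢ` the partial derivative `∂u/∂xᵢ` equals `-(∑ⱼ 1/aⱼ)⁻¹`, and at
points with `xᵢ = -aᵢ` the derivative in the direction `-eᵢ` equals the same constant. -/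
theorem stmt_7 (n : ℕ) (hn : 1 ≤ n) (a : Fin n → ℝ) (ha : ∀ i, 0 < a i)
    (u : (Fin n → ℝ) → ℝ)
    (hu : ∀ x, u x = -(∑ i, x i ^ 2 / a i) / (2 * ∑ j, (a j)⁻¹)) :
    ContDiff ℝ (⊤ : ℕ∞) u ∧
    (∀ x, ∑ i, fderiv ℝ (fun y => fderiv ℝ u y (Pi.single i (1 : ℝ))) x
        (Pi.single i (1 : ℝ)) = -1) ∧
    (∀ i, ∀ x : Fin n → ℝ, x i = a i →
        fderiv ℝ u x (Pi.single i (1 : ℝ)) = -(∑ j, (a j)⁻¹)⁻¹) ∧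
    (∀ i, ∀ x : Fin n → ℝ, x i = -a i →
        fderiv ℝ u x (-(Pi.single i (1 : ℝ))) = -(∑ j, (a j)⁻¹)⁻¹) := by
  have hne : Nonempty (Fin n) := Fin.pos_iff_nonempty.mp hn
  set S : ℝ := ∑ j, (a j)⁻¹ with hS
  have hSpos : 0 < S :=
    Finset.sum_pos (fun j _ => inv_pos.mpr (ha j)) Finset.univ_nonempty
  have hSne : S ≠ 0 := ne_of_gt hSpos
  set c : Fin n → ℝ := fun i => -(a i)⁻¹ / (2 * S) with hc
  have hfun : u = fun x => ∑ i, c i * x i ^ 2 := by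
    funext x
    rw [hu, neg_div, Finset.sum_div, ← Finset.sum_neg_distrib]
    exact Finset.sum_congr rfl fun i _ => by simp only [hc]; ring
  have hgi : ∀ (i : Fin n) x, HasFDerivAt (fun x : Fin n → ℝ => c i * x i ^ 2)
      ((2 * c i * x i) • (ContinuousLinearMap.proj i : (Fin n → ℝ) →L[ℝ] ℝ)) x := by
    intro i x
    have h1 : HasFDerivAt (fun x : Fin n → ℝ => x i)
        (ContinuousLinearMap.proj i : (Fin n → ℝ) →L[ℝ] ℝ) x :=
      hasFDerivAt_apply i x
    have h2 := (h1.mul h1).const_mul (c i)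
    simp only [pow_two]
    refine h2.congr_fderiv ?_
    ext v
    simp [smul_smul]
    ring
  have hderiv : ∀ x, HasFDerivAt u
      (∑ i, (2 * c i * x i) • (ContinuousLinearMap.proj i : (Fin n → ℝ) →L[ℝ] ℝ)) x := by
    intro x
    rw [hfun]
    exact HasFDerivAt.fun_sum fun i _ => hgi i x
  have key : ∀ (x : Fin n → ℝ) (i : Fin n),
      fderiv ℝ u x (Pi.single i (1 : ℝ)) = 2 * c i * x i := by
    intro x i
    rw [(hderiv x).fderiv]
    simp [ContinuousLinearMap.sum_apply, Pi.single_apply, Finset.sum_ite_eq']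
  refine ⟨?_, ?_, ?_, ?_⟩
  · rw [hfun]
    exact ContDiff.sum fun i _ =>
      contDiff_const.mul ((ContinuousLinearMap.proj i :
        (Fin n → ℝ) →L[ℝ] ℝ).contDiff.pow 2)
  · intro x
    have h2 : ∀ i : Fin n, fderiv ℝ (fun y => fderiv ℝ u y (Pi.single i (1 : ℝ))) x
        (Pi.single i (1 : ℝ)) = 2 * c i := by
      intro i
      have : (fun y : Fin n → ℝ => fderiv ℝ u y (Pi.single i (1 : ℝ)))
          = fun y => 2 * c i * y i := funext fun y => key y i
      rw [this]
      have h1 : HasFDerivAt (fun y : Fin n → ℝ => 2 * c i * y i)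
          ((2 * c i) • (ContinuousLinearMap.proj i : (Fin n → ℝ) →L[ℝ] ℝ)) x :=
        (ContinuousLinearMap.proj i :
          (Fin n → ℝ) →L[ℝ] ℝ).hasFDerivAt.const_mul (2 * c i)
      rw [h1.fderiv]
      simp
    simp only [h2]
    have : ∀ i : Fin n, 2 * c i = (a i)⁻¹ * (-S⁻¹) := by
      intro i
      simp only [hc]
      field_simp
    rw [Finset.sum_congr rfl fun i _ => this i, ← Finset.sum_mul, ← hS]
    field_simp
  · intro i x hx
    rw [key x i, hx]
    simp only [hc]
    have hai := (ha i).ne'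
    field_simp
  · intro i x hx
    rw [(fderiv ℝ u x).map_neg, key x i, hx]
    simp only [hc]
    have hai := (ha i).ne'
    field_simp
end

section
/- Fix an integer n ≥ 3. For ε > 0, set a₁(ε) = ε^{n−1} and a_i(ε) = 1/ε for 2 ≤ i ≤ n. Then the quantity (∑_i a_i(ε))/(2·∑_j 1/a_j(ε)) = (ε^{n−1} + (n−1)/ε)/(2·(ε^{1−n} + (n−1)ε)) tends to 0 as ε → 0⁺, while the volume of the box ∏_i(−a_i(ε), a_i(ε)), namely ∏_i 2a_i(ε) = 2ⁿ, is independent of ε. -/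
/-!
Clearing denominators, the oscillation of the box with half-sides `ε^(n-1), 1/ε, …, 1/ε` is
`ε^(n-2) · (ε^n + (n-1)) / (2 (1 + (n-1) ε^n))`, a function continuous at `0` that vanishes
there as soon as `n ≥ 3`; the volume is `2ⁿ` because `ε^(n-1)` exactly cancels the `n - 1`
factors `1/ε`.
-/

open Filter Topology

noncomputable section

/-- The oscillation over the box `∏ᵢ [-aᵢ, aᵢ]` of its torsion function
`u(x) = -(∑ᵢ xᵢ²/aᵢ) / (2 ∑ⱼ 1/aⱼ)`. -/
def boxOscillation {n : ℕ} (a : Fin n → ℝ) : ℝ := (∑ i, a i) / (2 * ∑ j, (a j)⁻¹)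

/-- The half-sides `a₁(ε), …, aₙ(ε)` with `n = k + 1`; the paper's `a₁` has index `0`. -/
def boxSide (k : ℕ) (ε : ℝ) (i : Fin (k + 1)) : ℝ := if (i : ℕ) = 0 then ε ^ k else 1 / ε

end

theorem sum_boxSide (k : ℕ) (ε : ℝ) : ∑ i, boxSide k ε i = ε ^ k + k / ε := by
  simp [boxSide, Fin.sum_univ_succ, div_eq_mul_inv]

theorem sum_inv_boxSide (k : ℕ) (ε : ℝ) : ∑ i, (boxSide k ε i)⁻¹ = (ε ^ k)⁻¹ + k * ε := by
  simp [boxSide, Fin.sum_univ_succ]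

theorem prod_two_mul_boxSide (k : ℕ) {ε : ℝ} (hε : ε ≠ 0) : ∏ i, 2 * boxSide k ε i = 2 ^ (k + 1) := by
  simp [boxSide, Fin.prod_univ_succ, mul_pow, pow_succ]
  field_simp

theorem boxOscillation_boxSide {k : ℕ} {ε : ℝ} (hk : 1 ≤ k) (hε : ε ≠ 0) :
    boxOscillation (boxSide k ε) =
      ε ^ (k - 1) * ((ε ^ (k + 1) + k) / (2 * (1 + k * ε ^ (k + 1)))) := by
  obtain ⟨j, rfl⟩ : ∃ j, k = j + 1 := ⟨k - 1, by omega⟩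
  rw [boxOscillation, sum_boxSide, sum_inv_boxSide, Nat.add_sub_cancel]
  field_simp
  ring

theorem tendsto_boxOscillation_boxSide {k : ℕ} (hk : 2 ≤ k) :
    Tendsto (fun ε => boxOscillation (boxSide k ε)) (𝓝[>] 0) (𝓝 0) := by
  have hcont : ContinuousAt
      (fun ε : ℝ => ε ^ (k - 1) * ((ε ^ (k + 1) + k) / (2 * (1 + k * ε ^ (k + 1))))) 0 := by
    fun_prop (disch := simp)
  have hlim := hcont.tendsto
  rw [zero_pow (by omega), zero_mul] at hlim
  refine (hlim.mono_left nhdsWithin_le_nhds).congr' ?_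
  filter_upwards [self_mem_nhdsWithin] with ε (hε : 0 < ε)
  exact (boxOscillation_boxSide (by omega) hε.ne').symm

/-- For `n ≥ 3`, with `a₁(ε) = ε^(n-1)` and `aᵢ(ε) = 1/ε` for `i ≥ 2`, the oscillation
quantity `(∑ᵢ aᵢ(ε)) / (2 ∑ⱼ 1/aⱼ(ε)) = (ε^(n-1) + (n-1)/ε)/(2(ε^(1-n) + (n-1)ε))`
tends to `0` as `ε → 0⁺`, while the volume `∏ᵢ 2aᵢ(ε) = 2ⁿ` of the box
`∏ᵢ (-aᵢ(ε), aᵢ(ε))` is independent of `ε`. -/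
theorem stmt_9 (n : ℕ) (hn : 3 ≤ n) (a : ℝ → Fin n → ℝ)
    (ha : ∀ ε, ∀ i : Fin n, a ε i = if (i : ℕ) = 0 then ε ^ (n - 1) else 1 / ε) :
    (∀ ε : ℝ, 0 < ε →
        (∑ i, a ε i) / (2 * ∑ j, (a ε j)⁻¹) =
          (ε ^ (n - 1) + (n - 1) / ε) / (2 * (ε ^ ((1 : ℤ) - n) + (n - 1) * ε))) ∧
    Tendsto (fun ε : ℝ => (∑ i, a ε i) / (2 * ∑ j, (a ε j)⁻¹)) (𝓝[>] 0) (𝓝 0) ∧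
    (∀ ε : ℝ, 0 < ε → ∏ i, (2 * a ε i) = 2 ^ n) := by
  obtain ⟨k, rfl⟩ : ∃ k, n = k + 1 := ⟨n - 1, by omega⟩
  obtain rfl : a = fun ε => boxSide k ε := by
    ext ε i
    simp [ha, boxSide]
  refine ⟨fun ε _ => ?_, tendsto_boxOscillation_boxSide (by omega),
    fun ε hε => prod_two_mul_boxSide k hε.ne'⟩
  simp [sum_boxSide, sum_inv_boxSide]
end

section
/- For every real b > 1, one has 2b³ − b² − 2b²·log b − 2b + 1 > 0. -/
open Real

/-- For every `b > 1`, `h(b) = 2b³ - b² - 2b² log b - 2b + 1 > 0`; this positivity implies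
`T(annulus) > T(disk)` at fixed area in `ℝ²`. -/
theorem stmt_13 (b : ℝ) (hb : 1 < b) :
    2 * b ^ 3 - b ^ 2 - 2 * b ^ 2 * Real.log b - 2 * b + 1 > 0 := by
  have h := Real.log_lt_sub_one_of_pos (by linarith : (0:ℝ) < b) (by linarith : b ≠ 1)
  nlinarith [sq_nonneg (b - 1), sq_nonneg b]
end

section
/- Let b > 1 and set a₃ := ((b³ + 1)/4 − (b²/2)·log b)/(b + 1). Then π(b² − 1)²/8 − 2π·∫_1^b (−r²/4 + (b/2)·log r + a₃)·r dr = (π/4)·(2b³ − b² − 2b²·log b − 2b + 1), and this quantity is strictly positive. (Hence, at fixed area, the torsion energy with boundary mean zero satisfies T(Ω₁) > T(Ω₂) for the annulus Ω₁ = {1 < |x| < b} versus the disk Ω₂ = {|x| < √(b² − 1)}.) -/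
open Real intervalIntegral

theorem hasDerivAt_sq_mul_log_div_two_sub {x : ℝ} (hx : x ≠ 0) :
    HasDerivAt (fun r : ℝ => r ^ 2 / 2 * log r - r ^ 2 / 4) (x * log x) x := by
  have h := (((hasDerivAt_pow 2 x).div_const 2).fun_mul (hasDerivAt_log hx)).fun_sub
    ((hasDerivAt_pow 2 x).div_const 4)
  exact h.congr_deriv (by field_simp; ring)

theorem integral_mul_log {a b : ℝ} (h : (0 : ℝ) ∉ Set.uIcc a b) :
    ∫ x in a..b, x * log x = (b ^ 2 / 2 * log b - b ^ 2 / 4) - (a ^ 2 / 2 * log a - a ^ 2 / 4) :=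
  integral_eq_sub_of_hasDerivAt
    (fun _ hx => hasDerivAt_sq_mul_log_div_two_sub (ne_of_mem_of_not_mem hx h))
    (continuous_mul_log.intervalIntegrable _ _)

theorem integral_torsion_profile {b : ℝ} (hb : 0 < b) (c d : ℝ) :
    ∫ r in (1 : ℝ)..b, (-r ^ 2 / 4 + c * log r + d) * r =
      -(b ^ 4 - 1) / 16 + c * (b ^ 2 / 2 * log b - b ^ 2 / 4 + 1 / 4) + d * (b ^ 2 - 1) / 2 := by
  have h0 : (0 : ℝ) ∉ Set.uIcc 1 b := Set.notMem_uIcc_of_lt one_pos hb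
  have hcube : IntervalIntegrable (fun r : ℝ => -r ^ 3 / 4) MeasureTheory.volume 1 b :=
    (continuous_pow 3).neg.div_const 4 |>.intervalIntegrable _ _
  have hlog : IntervalIntegrable (fun r : ℝ => c * (r * log r)) MeasureTheory.volume 1 b :=
    (continuous_mul_log.const_mul c).intervalIntegrable _ _
  have hlin : IntervalIntegrable (fun r : ℝ => d * r) MeasureTheory.volume 1 b :=
    (continuous_const.mul continuous_id).intervalIntegrable _ _
  calc ∫ r in (1 : ℝ)..b, (-r ^ 2 / 4 + c * log r + d) * r
      = ∫ r in (1 : ℝ)..b, (-r ^ 3 / 4 + c * (r * log r) + d * r) := by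
        congr 1; ext r; ring
    _ = -(∫ r in (1 : ℝ)..b, r ^ 3) / 4 + c * (∫ r in (1 : ℝ)..b, r * log r)
          + d * ∫ r in (1 : ℝ)..b, r := by
        rw [integral_add (hcube.add hlog) hlin, integral_add hcube hlog, integral_div,
          integral_neg, integral_const_mul, integral_const_mul]
    _ = _ := by
        rw [integral_pow, integral_mul_log h0, integral_id, log_one]
        ring

theorem two_mul_sq_mul_log_lt {b : ℝ} (hb : 1 < b) :
    2 * b ^ 2 * log b < 2 * b ^ 3 - b ^ 2 - 2 * b + 1 := by
  have hlog : log b < b - 1 := log_lt_sub_one_of_pos (by linarith) hb.ne'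
  have hb2 : 0 < 2 * b ^ 2 := by positivity
  linarith [mul_lt_mul_of_pos_left hlog hb2, sq_pos_of_pos (sub_pos.mpr hb)]

/-- At fixed area, comparing the disk `Ω₂ = {|x| < √(b²-1)}` and the annulus
`Ω₁ = {1 < |x| < b}` in `ℝ²`:
`∫_{Ω₂} u₂ - ∫_{Ω₁} u₁ = π(b²-1)²/8 - 2π ∫₁ᵇ f(r) r dr = (π/4)(2b³ - b² - 2b² log b - 2b + 1) > 0`,
hence `T(Ω₁) > T(Ω₂)` for the torsion energy with boundary mean zero. -/
theorem stmt_14 (b : ℝ) (hb : 1 < b) (a₃ : ℝ)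
    (ha₃ : a₃ = ((b ^ 3 + 1) / 4 - (b ^ 2 / 2) * Real.log b) / (b + 1)) :
    (π * (b ^ 2 - 1) ^ 2 / 8 -
        2 * π * ∫ r in (1 : ℝ)..b, (-r ^ 2 / 4 + (b / 2) * Real.log r + a₃) * r) =
      (π / 4) * (2 * b ^ 3 - b ^ 2 - 2 * b ^ 2 * Real.log b - 2 * b + 1) ∧
    0 < (π / 4) * (2 * b ^ 3 - b ^ 2 - 2 * b ^ 2 * Real.log b - 2 * b + 1) := by
  refine ⟨?_, mul_pos (by positivity) (by linarith [two_mul_sq_mul_log_lt hb])⟩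
  have hb1 : b + 1 ≠ 0 := by linarith
  rw [integral_torsion_profile (by linarith) _ _, ha₃]
  field_simp
  ring
end

section
/- Let n ≥ 3 be an integer and b > 1 a real number, and set c := (bⁿ − 1)/(n·(b^{n−1} + 1)). Then there do not exist real numbers a₂, a₃ such that the function f(r) := −r²/(2n) + a₂·r^{2−n} + a₃ satisfies all four of the following: f'(1) = c; f'(b) = −c; f(1) + b^{n−1}·f(b) = 0; and (c·(n−1)/b − 1)·f(b) = (−c·(n−1) − 1)·f(1). -/
/-!
If the shape-stationarity and zero-mean conditions both held, the linear system they form in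
`(f 1, f b)` has nonzero determinant, so the profile would vanish on both boundary spheres. A
radial profile vanishing at `1` and `b` is determined, and its flux `f'(1)` equals `c` only if
`2b(bᵐ - 1) = m(b - 1)(bᵐ⁺¹ + 1)` with `m = n - 2`. This fails for every `b > 1`: dividing by
`b - 1`, it compares the sum of `b, …, bᵐ` with `m` times the mean of the extreme powers `1` and
`bᵐ⁺¹`, and `bⁱ + bʲ < bⁱ⁺ʲ + 1` pairs off each term with its mirror image.
-/

lemma pow_add_pow_lt_pow_add_add_one {b : ℝ} (hb : 1 < b) {i j : ℕ} (hi : i ≠ 0)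
    (hj : j ≠ 0) :
    b ^ i + b ^ j < b ^ (i + j) + 1 := by
  nlinarith [mul_pos (sub_pos.2 (one_lt_pow₀ hb hi)) (sub_pos.2 (one_lt_pow₀ hb hj)),
    pow_add b i j]

lemma two_mul_sum_range_pow_succ_lt {b : ℝ} (hb : 1 < b) {m : ℕ} (hm : m ≠ 0) :
    2 * ∑ k ∈ Finset.range m, b ^ (k + 1) < m * (b ^ (m + 1) + 1) := by
  have reflect : ∑ k ∈ Finset.range m, b ^ (k + 1) = ∑ k ∈ Finset.range m, b ^ (m - k) := by
    rw [← Finset.sum_range_reflect]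
    refine Finset.sum_congr rfl fun k hk => ?_
    rw [Finset.mem_range] at hk
    congr 1
    omega
  calc 2 * ∑ k ∈ Finset.range m, b ^ (k + 1)
      = ∑ k ∈ Finset.range m, (b ^ (k + 1) + b ^ (m - k)) := by
        rw [two_mul, Finset.sum_add_distrib, ← reflect]
    _ < ∑ _k ∈ Finset.range m, (b ^ (m + 1) + 1) := by
        refine Finset.sum_lt_sum_of_nonempty (Finset.nonempty_range_iff.2 hm) fun k hk => ?_
        rw [Finset.mem_range] at hk
        have h := pow_add_pow_lt_pow_add_add_one hb k.succ_ne_zero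
          (Nat.sub_ne_zero_of_lt hk)
        rwa [show k + 1 + (m - k) = m + 1 by omega] at h
    _ = m * (b ^ (m + 1) + 1) := by
        rw [Finset.sum_const, Finset.card_range, nsmul_eq_mul]

lemma two_mul_mul_pow_sub_one_lt {b : ℝ} (hb : 1 < b) {m : ℕ} (hm : m ≠ 0) :
    2 * b * (b ^ m - 1) < m * (b - 1) * (b ^ (m + 1) + 1) := by
  have hsum : b * ∑ k ∈ Finset.range m, b ^ k = ∑ k ∈ Finset.range m, b ^ (k + 1) := by
    simp only [Finset.mul_sum, pow_succ']
  calc 2 * b * (b ^ m - 1)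
      = 2 * (∑ k ∈ Finset.range m, b ^ (k + 1)) * (b - 1) := by
        rw [← geom_sum_mul, ← hsum]; ring
    _ < m * (b ^ (m + 1) + 1) * (b - 1) :=
        mul_lt_mul_of_pos_right (two_mul_sum_range_pow_succ_lt hb hm) (sub_pos.2 hb)
    _ = m * (b - 1) * (b ^ (m + 1) + 1) := by ring

noncomputable def radialProfile (n : ℕ) (a₂ a₃ r : ℝ) : ℝ :=
  -r ^ 2 / (2 * n) + a₂ * r ^ ((2 : ℤ) - n) + a₃

lemma hasDerivAt_radialProfile (n : ℕ) (a₂ a₃ : ℝ) {r : ℝ} (hr : r ≠ 0) :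
    HasDerivAt (radialProfile n a₂ a₃)
      (-r / n + a₂ * ((2 - n : ℤ) * r ^ ((2 : ℤ) - n - 1))) r := by
  have hsq : HasDerivAt (fun r : ℝ => -r ^ 2 / (2 * n)) (-r / n) r := by
    refine ((hasDerivAt_pow 2 r).fun_neg.div_const (2 * (n : ℝ))).congr_deriv ?_
    norm_num [neg_div, mul_div_mul_left _ _ (two_ne_zero' ℝ)]
  exact (hsq.add ((hasDerivAt_zpow _ r (Or.inl hr)).const_mul a₂)).add_const a₃

lemma two_mul_mul_pow_sub_one_eq_of_radialProfile_eq_zero (m : ℕ) {a₂ a₃ b c : ℝ} (hb : 0 < b)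
    (hc : c = (b ^ (m + 2) - 1) / ((m + 2 : ℕ) * (b ^ (m + 1) + 1)))
    (hflux : deriv (radialProfile (m + 2) a₂ a₃) 1 = c)
    (h₁ : radialProfile (m + 2) a₂ a₃ 1 = 0) (h_b : radialProfile (m + 2) a₂ a₃ b = 0) :
    2 * b * (b ^ m - 1) = m * (b - 1) * (b ^ (m + 1) + 1) := by
  have hexp : (2 : ℤ) - (m + 2 : ℕ) = -m := by push_cast; ring
  rw [(hasDerivAt_radialProfile _ _ _ one_ne_zero).deriv] at hflux
  simp only [radialProfile, hexp, one_pow, one_zpow, mul_one, zpow_neg, zpow_natCast]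
    at hflux h₁ h_b
  have hP : 0 < b ^ m := by positivity
  push_cast at hflux hc h₁ h_b
  field_simp at hflux hc h₁ h_b
  refine mul_left_cancel₀ (mul_pos (by linarith : 0 < b + 1) hP).ne' ?_
  -- `bᵐ h₁ - h_b` eliminates `a₃` and `(b bᵐ + 1) hflux + hc` eliminates `c`, leaving two
  -- linear equations in `a₂` whose compatibility is the claim.
  linear_combination -(m * (b * b ^ m + 1)) * (b ^ m * h₁ - h_b)
    - (2 * (b ^ m - 1)) * ((b * b ^ m + 1) * hflux + hc)

lemma eq_zero_and_eq_zero_of_mean_zero_of_stationary {k b S x y : ℝ} (hk : 0 ≤ k) (hb : 1 ≤ b)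
    (hS : 1 ≤ S) (hmean : x + S * y = 0) (hstat : (k / b - 1) * y = (-k - 1) * x) :
    x = 0 ∧ y = 0 := by
  have hdet : k / b - 1 - S * (k + 1) < 0 := by
    linarith [div_le_self hk hb, le_mul_of_one_le_left (by linarith : 0 ≤ k + 1) hS]
  have hy : y * (k / b - 1 - S * (k + 1)) = 0 := by linear_combination hstat - (k + 1) * hmean
  have hy : y = 0 := (mul_eq_zero.1 hy).resolve_right hdet.ne
  exact ⟨by linear_combination hmean - S * hy, hy⟩

/-- No annulus `{1 < |x| < b} ⊂ ℝⁿ` (`n ≥ 3`) is a stationary shape of the torsion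
energy with boundary mean zero: with `c = (bⁿ-1)/(n(bⁿ⁻¹+1)) = |Ω|/P(Ω)`, there is no
radial profile `f(r) = -r²/(2n) + a₂ r^(2-n) + a₃` satisfying simultaneously the constant
Neumann conditions `f'(1) = c`, `f'(b) = -c`, the vanishing boundary mean condition
`f(1) + bⁿ⁻¹ f(b) = 0`, and the shape-stationarity condition
`(c(n-1)/b - 1) f(b) = (-c(n-1) - 1) f(1)`. -/
theorem stmt_15 (n : ℕ) (hn : 3 ≤ n) (b : ℝ) (hb : 1 < b) (c : ℝ)
    (hc : c = (b ^ n - 1) / (n * (b ^ (n - 1) + 1))) :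
    ¬∃ a₂ a₃ : ℝ, ∃ f : ℝ → ℝ,
      (∀ r : ℝ, f r = -r ^ 2 / (2 * n) + a₂ * r ^ ((2 : ℤ) - n) + a₃) ∧
      deriv f 1 = c ∧
      deriv f b = -c ∧
      f 1 + b ^ (n - 1) * f b = 0 ∧
      (c * (n - 1) / b - 1) * f b = (-(c * (n - 1)) - 1) * f 1 := by
  rintro ⟨a₂, a₃, f, hf, hflux, -, hmean, hstat⟩
  obtain rfl : f = radialProfile n a₂ a₃ := funext hf
  have hk : 0 ≤ c * (n - 1) := by
    rw [hc]
    exact mul_nonneg (div_nonneg (sub_nonneg.2 (one_le_pow₀ hb.le)) (by positivity))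
      (sub_nonneg.2 (Nat.one_le_cast.2 (by omega)))
  obtain ⟨h₁, h_b⟩ :=
    eq_zero_and_eq_zero_of_mean_zero_of_stationary hk hb.le (one_le_pow₀ hb.le) hmean hstat
  obtain ⟨m, rfl⟩ : ∃ m, n = m + 2 := ⟨n - 2, by omega⟩
  rw [show m + 2 - 1 = m + 1 by omega] at hc
  exact (two_mul_mul_pow_sub_one_lt hb (by omega)).ne
    (two_mul_mul_pow_sub_one_eq_of_radialProfile_eq_zero m (by linarith) hc hflux h₁ h_b)
end

section
/- Let b > 1 be a real number. Then there do not exist real numbers a₂, a₃ such that the function f(r) := −r²/4 + a₂·log r + a₃ satisfies all four of the following: f'(1) = (b − 1)/2; f'(b) = −(b − 1)/2; f(1) + b·f(b) = 0; and ((b − 1)/(2b) − 1)·f(b) = (−(b − 1)/2 − 1)·f(1). -/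
open Real

/-!
Differentiating the profile shows that the Neumann condition at `r = 1` forces `a₂ = b / 2`.
The stationarity condition reduces to `f b = b f 1`, and then the mean-zero condition gives
`(1 + b²) f 1 = 0`, so `f` vanishes at both radii. Eliminating `a₃` leaves
`log b = (b - b⁻¹) / 2 = sinh (log b)`, impossible since `t < sinh t` for `t > 0`.
-/

theorem Real.log_lt_half_sub_inv {x : ℝ} (hx : 1 < x) : log x < (x - x⁻¹) / 2 := by
  rw [← sinh_log (by linarith)]
  exact self_lt_sinh_iff.mpr (log_pos hx)

theorem deriv_radial_torsion_profile (a₂ a₃ : ℝ) {x : ℝ} (hx : x ≠ 0) :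
    deriv (fun r : ℝ => -r ^ 2 / 4 + a₂ * log r + a₃) x = -x / 2 + a₂ / x := by
  have h : HasDerivAt (fun r : ℝ => -r ^ 2 / 4 + a₂ * log r + a₃) (-(2 * x) / 4 + a₂ * x⁻¹) x := by
    simpa using (((hasDerivAt_pow 2 x).neg.div_const 4).add
      ((hasDerivAt_log hx).const_mul a₂)).add_const a₃
  rw [h.deriv]
  ring

/-- No planar annulus `{1 < |x| < b} ⊂ ℝ²` is a stationary shape of the torsion energy
with boundary mean zero: there is no radial profile `f(r) = -r²/4 + a₂ log r + a₃`
satisfying simultaneously the constant Neumann conditions `f'(1) = (b-1)/2`,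
`f'(b) = -(b-1)/2`, the vanishing boundary mean condition `f(1) + b f(b) = 0`, and the
shape-stationarity condition `((b-1)/(2b) - 1) f(b) = (-(b-1)/2 - 1) f(1)`. -/
theorem stmt_16 (b : ℝ) (hb : 1 < b) :
    ¬∃ a₂ a₃ : ℝ, ∃ f : ℝ → ℝ,
      (∀ r : ℝ, f r = -r ^ 2 / 4 + a₂ * Real.log r + a₃) ∧
      deriv f 1 = (b - 1) / 2 ∧
      deriv f b = -(b - 1) / 2 ∧
      f 1 + b * f b = 0 ∧
      ((b - 1) / (2 * b) - 1) * f b = (-(b - 1) / 2 - 1) * f 1 := by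
  rintro ⟨a₂, a₃, f, hf, hderiv₁, -, hmean, hstat⟩
  have hb₀ : 0 < b := by linarith
  have ha₂ : a₂ = b / 2 := by
    rw [funext hf, deriv_radial_torsion_profile a₂ a₃ one_ne_zero] at hderiv₁
    linarith
  have hfb : f b = b * f 1 := by
    field_simp at hstat
    refine mul_left_cancel₀ (by positivity : b + 1 ≠ 0) ?_
    linear_combination -hstat
  have hf₁ : f 1 = 0 := by
    have : (1 + b ^ 2) * f 1 = 0 := by linear_combination hmean - b * hfb
    exact (mul_eq_zero.mp this).resolve_left (by positivity)
  have ha₃ : a₃ = 1 / 4 := by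
    have := hf 1
    simp only [log_one] at this
    linarith
  have hlog : log b = (b - b⁻¹) / 2 := by
    have := hf b
    rw [hfb, hf₁, ha₂, ha₃] at this
    field_simp
    linear_combination -4 * this
  exact (log_lt_half_sub_inv hb).ne hlog
end
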